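/- For every finite nonempty set X and all elements a, b, c, d, e, f, g of R(X,3), ternary intermolecular recombination satisfies the identity Q: ⟦⟦⟦a,d,e⟧,b,g⟧,c,f⟧ − ⟦⟦⟦a,d,e⟧,f,g⟧,b,c⟧ − ⟦⟦⟦b,d,e⟧,a,g⟧,c,f⟧ + ⟦⟦⟦b,d,e⟧,f,g⟧,a,c⟧ + ⟦⟦⟦d,e,f⟧,a,g⟧,b,c⟧ − ⟦⟦⟦d,e,f⟧,b,g⟧,a,c⟧ = 0. -/
import Mathlib


open scoped BigOperators

/-- The tensor-like product of finitely supported functions. -/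
noncomputable def tensorPi {n : ℕ} {B : Type*} (f : Fin n → (B →₀ ℚ)) :
    (Fin n → B) →₀ ℚ :=
  haveI := Classical.decEq B
  Finsupp.onFinset (Fintype.piFinset fun j => (f j).support)
    (fun w => ∏ j, f j (w j))
    (fun w hw => by
      rw [Fintype.mem_piFinset]
      intro j
      rw [Finsupp.mem_support_iff]
      intro h0
      exact hw (Finset.prod_eq_zero (Finset.mem_univ j) h0))

/-- `R(X,n)`: the vector space over `ℚ` with basis the set `(X*)^n` of `n`-tuples of elements
of the free semigroup `X*` on `X`. -/
abbrev RXn (X : Type*) (n : ℕ) : Type _ := (Fin n → FreeSemigroup X) →₀ ℚ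

/-- `n`-ary intermolecular recombination: the `ℚ`-multilinear extension of
`⟦a_1,…,a_n⟧ = Σ_{σ ∈ S_n} (a_{σ(1),1}, a_{σ(2),2}, …, a_{σ(n),n})` on basis elements. -/
noncomputable def recomb {X : Type*} {n : ℕ} (a : Fin n → RXn X n) : RXn X n :=
  ∑ σ : Equiv.Perm (Fin n),
    tensorPi fun j => Finsupp.mapDomain (fun w => w j) (a (σ j))

/-- Ternary intermolecular recombination `⟦a,b,c⟧` on `R(X,3)`. -/
noncomputable def op3 {X : Type*} (a b c : RXn X 3) : RXn X 3 :=
  recomb ![a, b, c]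



section Aux

variable {B : Type*}

/-- total mass of a finitely supported function -/
def tot (u : B →₀ ℚ) : ℚ := u.sum fun _ r => r

lemma tot_mapDomain {C : Type*} (g : B → C) (u : B →₀ ℚ) :
    tot (Finsupp.mapDomain g u) = tot u :=
  Finsupp.sum_mapDomain_index (fun _ => rfl) (fun _ _ _ => rfl)

lemma tot_smul (c : ℚ) (u : B →₀ ℚ) : tot (c • u) = c * tot u := by
  unfold tot
  rw [Finsupp.sum_smul_index' (fun _ => rfl)]
  simp [Finsupp.sum, Finset.mul_sum, smul_eq_mul]

lemma tot_finsetSum {ι : Type*} (s : Finset ι) (f : ι → (B →₀ ℚ)) :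
    tot (∑ i ∈ s, f i) = ∑ i ∈ s, tot (f i) :=
  (Finsupp.sum_finset_sum_index (h := fun _ r => r) (fun _ => rfl) (fun _ _ _ => rfl)).symm

lemma tensorPi_apply {n : ℕ} (f : Fin n → (B →₀ ℚ)) (w : Fin n → B) :
    tensorPi f w = ∏ j, f j (w j) := by
  simp [tensorPi]

theorem mapDomain_tensorPi {n : ℕ} (f : Fin n → (B →₀ ℚ)) (j : Fin n) :
    Finsupp.mapDomain (fun w => w j) (tensorPi f) =
      (∏ i ∈ Finset.univ.erase j, tot (f i)) • f j := by
  classical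
  ext x
  rw [Finsupp.mapDomain, Finsupp.sum_apply, Finsupp.smul_apply]
  have hsum : (tensorPi f).sum (fun w r => (Finsupp.single (w j) r) x) =
      ∑ w ∈ Fintype.piFinset (fun i => (f i).support),
        (Finsupp.single (w j) (∏ i, f i (w i))) x := by
    simp only [tensorPi]
    exact Finsupp.onFinset_sum _ (fun a => by simp)
  rw [hsum]
  set h : Fin n → B → ℚ := fun i b => if i = j then (if b = x then f i b else 0) else f i b
    with hh
  have key : ∀ w : Fin n → B,
      (Finsupp.single (w j) (∏ i, f i (w i))) x = ∏ i, h i (w i) := by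
    intro w
    have h1 : ∏ i, h i (w i) = h j (w j) * ∏ i ∈ Finset.univ.erase j, h i (w i) :=
      (Finset.mul_prod_erase Finset.univ _ (Finset.mem_univ j)).symm
    have h2 : ∏ i ∈ Finset.univ.erase j, h i (w i)
        = ∏ i ∈ Finset.univ.erase j, f i (w i) :=
      Finset.prod_congr rfl (fun i hi => by simp [hh, (Finset.mem_erase.mp hi).1])
    have h3 : ∏ i, f i (w i) = f j (w j) * ∏ i ∈ Finset.univ.erase j, f i (w i) :=
      (Finset.mul_prod_erase Finset.univ _ (Finset.mem_univ j)).symm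
    rw [Finsupp.single_apply, h1, h2]
    by_cases hw : w j = x
    · subst hw; simp [hh, h3]
    · simp [hh, hw, h3]
  rw [Finset.sum_congr rfl (fun w _ => key w), ← Finset.prod_univ_sum]
  rw [← Finset.mul_prod_erase Finset.univ _ (Finset.mem_univ j)]
  have hj : ∑ b ∈ (f j).support, h j b = f j x := by
    simp only [hh, if_pos rfl]
    rw [Finset.sum_ite_eq' (f j).support x (fun b => f j b)]
    by_cases hx : x ∈ (f j).support
    · simp [hx]
    · simp [hx, Finsupp.notMem_support_iff.mp hx]
  have hi : ∀ i ∈ Finset.univ.erase j, ∑ b ∈ (f i).support, h i b = tot (f i) := by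
    intro i hi
    simp only [hh, if_neg (Finset.mem_erase.mp hi).1]
    rfl
  rw [hj, Finset.prod_congr rfl hi, mul_comm, smul_eq_mul]

lemma tot_tensorPi (f : Fin 3 → (B →₀ ℚ)) :
    tot (tensorPi f) = tot (f 0) * (tot (f 1) * tot (f 2)) := by
  rw [← tot_mapDomain (fun w : Fin 3 → B => w 0) (tensorPi f),
    mapDomain_tensorPi f 0, tot_smul]
  have : (Finset.univ.erase (0 : Fin 3)) = {1, 2} := by decide
  rw [this, Finset.prod_pair (by decide)]
  ring

end Aux

/-! ### the six permutations of `Fin 3` -/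

def q0 : Equiv.Perm (Fin 3) := ⟨![0,1,2], ![0,1,2], by decide, by decide⟩
def q1 : Equiv.Perm (Fin 3) := ⟨![1,0,2], ![1,0,2], by decide, by decide⟩
def q2 : Equiv.Perm (Fin 3) := ⟨![2,1,0], ![2,1,0], by decide, by decide⟩
def q3 : Equiv.Perm (Fin 3) := ⟨![0,2,1], ![0,2,1], by decide, by decide⟩
def q4 : Equiv.Perm (Fin 3) := ⟨![1,2,0], ![2,0,1], by decide, by decide⟩
def q5 : Equiv.Perm (Fin 3) := ⟨![2,0,1], ![1,2,0], by decide, by decide⟩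

lemma permSum {M : Type*} [AddCommMonoid M] (F : Equiv.Perm (Fin 3) → M) :
    ∑ σ : Equiv.Perm (Fin 3), F σ =
      F q0 + F q1 + F q2 + F q3 + F q4 + F q5 := by
  rw [← Fintype.sum_bijective (![q0,q1,q2,q3,q4,q5] : Fin 6 → Equiv.Perm (Fin 3))
    (by decide) _ F (fun i => rfl)]
  rw [Fin.sum_univ_six]
  rfl

section Main

variable {X : Type*}

/-- marginals of `op3` -/
lemma mapDomain_op3 (x y z : RXn X 3) (j : Fin 3) :
    Finsupp.mapDomain (fun w => w j) (op3 x y z) =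
      (2 * (tot y * tot z)) • Finsupp.mapDomain (fun w => w j) x
      + (2 * (tot x * tot z)) • Finsupp.mapDomain (fun w => w j) y
      + (2 * (tot x * tot y)) • Finsupp.mapDomain (fun w => w j) z := by
  unfold op3 recomb
  rw [Finsupp.mapDomain_finset_sum]
  rw [permSum (fun σ => Finsupp.mapDomain (fun w => w j)
    (tensorPi fun i => Finsupp.mapDomain (fun w => w i) (![x,y,z] (σ i))))]
  simp only [mapDomain_tensorPi, tot_mapDomain]
  have hj : j = 0 ∨ j = 1 ∨ j = 2 := by fin_cases j <;> decide
  rcases hj with hj | hj | hj <;> subst hj <;>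
  · first
    | rw [show (Finset.univ.erase (0 : Fin 3)) = {1, 2} from by decide]
    | rw [show (Finset.univ.erase (1 : Fin 3)) = {0, 2} from by decide]
    | rw [show (Finset.univ.erase (2 : Fin 3)) = {0, 1} from by decide]
    rw [Finset.prod_pair (by decide), Finset.prod_pair (by decide),
      Finset.prod_pair (by decide), Finset.prod_pair (by decide),
      Finset.prod_pair (by decide), Finset.prod_pair (by decide)]
    simp only [q0, q1, q2, q3, q4, q5, Equiv.coe_fn_mk, Matrix.cons_val_zero,
      Matrix.cons_val_one, Matrix.head_cons, Matrix.cons_val_two, Matrix.tail_cons]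
    module

/-- total of `op3` -/
lemma tot_op3 (x y z : RXn X 3) :
    tot (op3 x y z) = 6 * (tot x * (tot y * tot z)) := by
  unfold op3 recomb
  rw [tot_finsetSum]
  rw [permSum (fun σ => tot (tensorPi fun i => Finsupp.mapDomain (fun w => w i) (![x,y,z] (σ i))))]
  simp only [tot_tensorPi, tot_mapDomain]
  simp only [q0, q1, q2, q3, q4, q5, Equiv.coe_fn_mk, Matrix.cons_val_zero,
    Matrix.cons_val_one, Matrix.head_cons, Matrix.cons_val_two, Matrix.tail_cons]
  ring

lemma op3_apply (x y z : RXn X 3) (w : Fin 3 → FreeSemigroup X) :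
    op3 x y z w = ∑ σ : Equiv.Perm (Fin 3),
      (Finsupp.mapDomain (fun u => u 0) (![x,y,z] (σ 0))) (w 0)
      * ((Finsupp.mapDomain (fun u => u 1) (![x,y,z] (σ 1))) (w 1)
      * (Finsupp.mapDomain (fun u => u 2) (![x,y,z] (σ 2))) (w 2)) := by
  unfold op3 recomb
  rw [Finset.sum_apply']
  refine Finset.sum_congr rfl (fun σ _ => ?_)
  rw [tensorPi_apply, Fin.prod_univ_three, mul_assoc]

/-- the absorption identity -/
lemma op3_absorb (x y z u v : RXn X 3) :
    op3 (op3 x y z) u v =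
      (2 * (tot y * tot z)) • op3 x u v
      + (2 * (tot x * tot z)) • op3 y u v
      + (2 * (tot x * tot y)) • op3 z u v := by
  ext w
  simp only [Finsupp.add_apply, Finsupp.smul_apply, op3_apply, smul_eq_mul]
  rw [permSum, permSum, permSum, permSum]
  simp only [q0, q1, q2, q3, q4, q5, Equiv.coe_fn_mk, Matrix.cons_val_zero,
    Matrix.cons_val_one, Matrix.head_cons, Matrix.cons_val_two, Matrix.tail_cons]
  simp only [mapDomain_op3, Finsupp.add_apply, Finsupp.smul_apply, smul_eq_mul]
  ring

lemma op3_perm (v : Fin 3 → RXn X 3) (v' : Fin 3 → RXn X 3) (τ : Equiv.Perm (Fin 3))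
    (hv : ∀ i, v i = v' (τ i)) : recomb v = recomb v' := by
  unfold recomb
  refine Fintype.sum_equiv (Equiv.mulLeft τ) _ _ (fun σ => ?_)
  congr 1
  funext j
  rw [hv (σ j)]
  rfl

lemma op3_comm12 (x y z : RXn X 3) : op3 x y z = op3 y x z :=
  op3_perm _ _ (Equiv.swap 0 1) (by intro i; fin_cases i <;> simp [Equiv.swap_apply_def])

lemma op3_comm23 (x y z : RXn X 3) : op3 x y z = op3 x z y :=
  op3_perm _ _ (Equiv.swap 1 2) (by intro i; fin_cases i <;> simp [Equiv.swap_apply_def])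

end Main

/-- ternary intermolecular recombination satisfies the identity `Q`. -/
theorem ternary_identity_Q {X : Type*} [Fintype X] [Nonempty X]
    (a b c d e f g : RXn X 3) :
    op3 (op3 (op3 a d e) b g) c f
      - op3 (op3 (op3 a d e) f g) b c
      - op3 (op3 (op3 b d e) a g) c f
      + op3 (op3 (op3 b d e) f g) a c
      + op3 (op3 (op3 d e f) a g) b c
      - op3 (op3 (op3 d e f) b g) a c = 0 := by
  have key : ∀ x y z u v p q : RXn X 3,
      op3 (op3 (op3 x y z) u v) p q =
        (2 * (tot u * tot v) * (2 * (tot y * tot z))) • op3 x p q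
        + (2 * (tot u * tot v) * (2 * (tot x * tot z))) • op3 y p q
        + (2 * (tot u * tot v) * (2 * (tot x * tot y))) • op3 z p q
        + (2 * (6 * (tot x * (tot y * tot z))) * tot v) • op3 u p q
        + (2 * (6 * (tot x * (tot y * tot z))) * tot u) • op3 v p q := by
    intro x y z u v p q
    rw [op3_absorb (op3 x y z) u v, op3_absorb x y z p q, tot_op3, smul_add, smul_add,
      smul_smul, smul_smul, smul_smul]
    module
  rw [key a d e b g c f, key a d e f g b c, key b d e a g c f, key b d e f g a c,
    key d e f a g b c, key d e f b g a c]
  have hba : op3 b a c = op3 a b c := op3_comm12 b a c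
  have hfac : op3 f a c = op3 a c f := by rw [op3_comm12, op3_comm23]
  have hfbc : op3 f b c = op3 b c f := by rw [op3_comm12, op3_comm23]
  rw [hba, hfac, hfbc]
  module
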